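/- arXiv:2407.06144 — 5 statements merged into one kernel-verified Lean document; each statement's English description precedes it below -/
import Mathlib

section
/- Fix $R \in [1,\infty]$, $\theta \in (0,1]$, and let $\varphi$ be a conformal (injective holomorphic) map on $(-R,R) \times i(0,\infty)$. If there exists $C \in (0,\infty)$ such that $|\varphi'(z)| \le C\,\max\{(\mathrm{Im}\,z)^{\theta-1}, 1\}$ for all $z$ in the domain, then $\varphi$ extends to a continuous function on the closure $\overline{(-R,R) \times i(0,\infty)}$. -/
/-!
Integrating the derivative bound along a vertical segment `[x + a i, x + b i]` gives
`‖φ (x + b i) - φ (x + a i)‖ ≤ C ((b - a)^θ / θ + (b - a))`, by subadditivity of `t ↦ t^θ`.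
Two points `z, w` at distance `d` are joined by going up to the height
`Y = max (Im z) (Im w) d`, across horizontally, where `|φ'| ≤ C max (Y^(θ-1)) 1` and `Y ≥ d`,
and down again; so `‖φ z - φ w‖ ≤ 3C (d^θ / θ + d)`. Hence `φ` is uniformly continuous on the
half-strip and extends continuously to its closure.
-/

open Set Filter Topology Complex

theorem Real.rpow_sub_rpow_le_sub_rpow {θ a b : ℝ} (hθ0 : 0 ≤ θ) (hθ1 : θ ≤ 1) (ha : 0 ≤ a)
    (hab : a ≤ b) : b ^ θ - a ^ θ ≤ (b - a) ^ θ := by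
  have := Real.rpow_add_le_add_rpow ha (sub_nonneg.2 hab) hθ0 hθ1
  rw [add_sub_cancel] at this
  linarith

theorem Real.max_rpow_sub_one_mul_le {θ d Y : ℝ} (hθ1 : θ ≤ 1) (hd : 0 ≤ d) (hdY : d ≤ Y) :
    max (Y ^ (θ - 1)) 1 * d ≤ d ^ θ + d := by
  rcases hd.eq_or_lt with rfl | hd
  · simp only [mul_zero, add_zero]
    positivity
  calc max (Y ^ (θ - 1)) 1 * d ≤ (d ^ (θ - 1) + 1) * d := by
        gcongr
        exact (max_le_max_right 1 (Real.rpow_le_rpow_of_nonpos hd hdY (by linarith))).trans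
          (max_le_add_of_nonneg (by positivity) zero_le_one)
    _ = d ^ θ + d := by rw [add_mul, one_mul, ← Real.rpow_add_one hd.ne']; ring_nf

section MeanValue

variable {E : Type*} [NormedAddCommGroup E] [NormedSpace ℝ E] {f f' : ℝ → E} {a b : ℝ}

theorem norm_sub_le_sub_of_norm_deriv_le {g g' : ℝ → ℝ} (hab : a ≤ b)
    (hf : ∀ t ∈ Icc a b, HasDerivAt f (f' t) t) (hg : ∀ t ∈ Icc a b, HasDerivAt g (g' t) t)
    (hfg : ∀ t ∈ Icc a b, ‖f' t‖ ≤ g' t) : ‖f b - f a‖ ≤ g b - g a :=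
  image_norm_le_of_norm_deriv_right_le_deriv_boundary' (f := fun t => f t - f a)
    (B := fun t => g t - g a)
    (fun t ht => ((hf t ht).sub_const _).continuousAt.continuousWithinAt)
    (fun t ht => ((hf t (Ico_subset_Icc_self ht)).sub_const _).hasDerivWithinAt) (by simp)
    (fun t ht => ((hg t ht).sub_const _).continuousAt.continuousWithinAt)
    (fun t ht => ((hg t (Ico_subset_Icc_self ht)).sub_const _).hasDerivWithinAt)
    (fun t ht => hfg t (Ico_subset_Icc_self ht)) (right_mem_Icc.2 hab)

theorem norm_sub_le_of_norm_deriv_le_max_rpow {θ C : ℝ} (hθ0 : 0 < θ) (hθ1 : θ ≤ 1) (hC : 0 ≤ C)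
    (ha : 0 < a) (hab : a ≤ b) (hf : ∀ t ∈ Icc a b, HasDerivAt f (f' t) t)
    (hbound : ∀ t ∈ Icc a b, ‖f' t‖ ≤ C * max (t ^ (θ - 1)) 1) :
    ‖f b - f a‖ ≤ C * ((b - a) ^ θ / θ + (b - a)) := by
  have hg : ∀ t ∈ Icc a b,
      HasDerivAt (fun s => C * (s ^ θ / θ + s)) (C * (t ^ (θ - 1) + 1)) t := by
    intro t ht
    have := (((Real.hasDerivAt_rpow_const (p := θ) (Or.inl (ha.trans_le ht.1).ne')).div_const
      θ).add (hasDerivAt_id' t)).const_mul C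
    rwa [mul_div_cancel_left₀ _ hθ0.ne'] at this
  calc ‖f b - f a‖ ≤ C * (b ^ θ / θ + b) - C * (a ^ θ / θ + a) :=
        norm_sub_le_sub_of_norm_deriv_le hab hf hg fun t ht => (hbound t ht).trans <| by
          gcongr
          exact max_le_add_of_nonneg (Real.rpow_nonneg (ha.trans_le ht.1).le _) zero_le_one
    _ = C * ((b ^ θ - a ^ θ) / θ + (b - a)) := by ring
    _ ≤ C * ((b - a) ^ θ / θ + (b - a)) := by
        gcongr
        exact Real.rpow_sub_rpow_le_sub_rpow hθ0.le hθ1 ha.le hab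

end MeanValue

theorem Metric.uniformContinuousOn_of_dist_le {α β : Type*} [PseudoMetricSpace α]
    [PseudoMetricSpace β] {f : α → β} {s : Set α} {ω : ℝ → ℝ} (hω : Tendsto ω (𝓝 0) (𝓝 0))
    (h : ∀ x ∈ s, ∀ y ∈ s, dist (f x) (f y) ≤ ω (dist x y)) : UniformContinuousOn f s := by
  refine Metric.uniformContinuousOn_iff.2 fun ε hε => ?_
  obtain ⟨δ, hδ, hωδ⟩ := Metric.tendsto_nhds_nhds.1 hω ε hε
  refine ⟨δ, hδ, fun x hx y hy hxy => (h x hx y hy).trans_lt ?_⟩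
  have := hωδ (x := dist x y) (by simpa [abs_of_nonneg dist_nonneg] using hxy)
  exact (le_abs_self _).trans_lt (by simpa using this)

theorem UniformContinuousOn.exists_continuousOn_closure_eqOn {α β : Type*} [UniformSpace α]
    [UniformSpace β] [CompleteSpace β] [T2Space β] {f : α → β} {s : Set α}
    (hf : UniformContinuousOn f s) : ∃ g : α → β, ContinuousOn g (closure s) ∧ EqOn g f s := by
  refine ⟨extendFrom s f, continuousOn_extendFrom subset_rfl fun x hx => ?_,
    extendFrom_extends hf.continuousOn⟩
  have := mem_closure_iff_nhdsWithin_neBot.1 hx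
  exact CompleteSpace.complete
    ((cauchy_nhds.mono nhdsWithin_le_nhds).map_of_le hf (le_principal_iff.2 self_mem_nhdsWithin))

def halfStrip (R : EReal) : Set ℂ := {z : ℂ | 0 < z.im ∧ -R < (z.re : EReal) ∧ (z.re : EReal) < R}

section halfStrip

variable (R : EReal)

theorem isOpen_halfStrip : IsOpen (halfStrip R) := by
  have hre : Continuous fun z : ℂ => (z.re : EReal) :=
    continuous_coe_real_ereal.comp Complex.continuous_re
  exact (isOpen_lt continuous_const Complex.continuous_im).inter
    ((isOpen_lt continuous_const hre).inter (isOpen_lt hre continuous_const))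

theorem convex_halfStrip : Convex ℝ (halfStrip R) :=
  (convex_halfSpace_gt Complex.imLm.isLinear 0).inter <|
    ((ordConnected_Ioo (a := -R) (b := R)).preimage_mono
      EReal.coe_strictMono.monotone).convex.is_linear_preimage Complex.reLm.isLinear

theorem re_add_mul_I_mem_halfStrip {z : ℂ} (hz : z ∈ halfStrip R) {t : ℝ} (ht : z.im ≤ t) :
    (z.re + t * I : ℂ) ∈ halfStrip R := by
  obtain ⟨him, hre⟩ := hz
  exact ⟨by simpa using him.trans_le ht, by simpa using hre⟩

end halfStrip

section UpperHalfPlane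

variable {D : Set ℂ} {φ : ℂ → ℂ} {θ C : ℝ}

theorem norm_sub_le_of_vertical_segment (hD : IsOpen D) (hφ : DifferentiableOn ℂ φ D)
    (hθ0 : 0 < θ) (hθ1 : θ ≤ 1) (hC : 0 ≤ C)
    (hbound : ∀ z ∈ D, ‖deriv φ z‖ ≤ C * max (z.im ^ (θ - 1)) 1) {x a b : ℝ} (ha : 0 < a)
    (hab : a ≤ b) (hseg : ∀ t ∈ Icc a b, (x + t * I : ℂ) ∈ D) :
    ‖φ (x + b * I) - φ (x + a * I)‖ ≤ C * ((b - a) ^ θ / θ + (b - a)) := by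
  refine norm_sub_le_of_norm_deriv_le_max_rpow (f := fun t : ℝ => φ (x + t * I))
    (f' := fun t => deriv φ (x + t * I) * I)
    hθ0 hθ1 hC ha hab (fun t ht => ?_) (fun t ht => ?_)
  · have hline : HasDerivAt (fun w : ℂ => x + w * I) I t := by
      simpa using ((hasDerivAt_id (t : ℂ)).mul_const I).const_add (x : ℂ)
    exact (HasDerivAt.comp (t : ℂ) (hφ.differentiableAt (hD.mem_nhds (hseg t ht))).hasDerivAt
      hline).comp_ofReal
  · simpa using hbound _ (hseg t ht)

theorem norm_sub_le_of_norm_deriv_le_max_im_rpow (hDo : IsOpen D) (hDc : Convex ℝ D)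
    (hDim : ∀ z ∈ D, 0 < z.im) (hDup : ∀ z ∈ D, ∀ t : ℝ, z.im ≤ t → (z.re + t * I : ℂ) ∈ D)
    (hφ : DifferentiableOn ℂ φ D) (hθ0 : 0 < θ) (hθ1 : θ ≤ 1) (hC : 0 ≤ C)
    (hbound : ∀ z ∈ D, ‖deriv φ z‖ ≤ C * max (z.im ^ (θ - 1)) 1) {z w : ℂ} (hz : z ∈ D)
    (hw : w ∈ D) : ‖φ z - φ w‖ ≤ 3 * C * (‖z - w‖ ^ θ / θ + ‖z - w‖) := by
  set d := ‖z - w‖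
  set Y := max (max z.im w.im) d
  have hre : |z.re - w.re| ≤ d := by simpa using abs_re_le_norm (z - w)
  have him : |z.im - w.im| ≤ d := by simpa using abs_im_le_norm (z - w)
  have vert : ∀ u ∈ D, u.im ≤ Y → Y - u.im ≤ d →
      ‖φ (u.re + Y * I) - φ u‖ ≤ C * (d ^ θ / θ + d) := by
    intro u hu huY hYu
    have := norm_sub_le_of_vertical_segment hDo hφ hθ0 hθ1 hC hbound (hDim u hu) huY
      fun t ht => hDup u hu t ht.1
    rw [re_add_im] at this
    refine this.trans ?_
    have hYuY := sub_nonneg.2 huY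
    gcongr
  have horiz : ‖φ (z.re + Y * I) - φ (w.re + Y * I)‖ ≤ C * (d ^ θ / θ + d) := by
    have hs : Convex ℝ (D ∩ {u | u.im = Y}) :=
      hDc.inter (convex_hyperplane Complex.imLm.isLinear Y)
    have hdist : ‖(z.re + Y * I : ℂ) - (w.re + Y * I)‖ ≤ d := by
      simpa [← Complex.ofReal_sub] using hre
    calc _ ≤ C * max (Y ^ (θ - 1)) 1 * ‖(z.re + Y * I : ℂ) - (w.re + Y * I)‖ :=
          hs.norm_image_sub_le_of_norm_deriv_le
            (fun u hu => hφ.differentiableAt (hDo.mem_nhds hu.1))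
            (fun u (hu : u ∈ D ∩ {u | u.im = Y}) => hu.2 ▸ hbound u hu.1)
            ⟨hDup w hw Y ((le_max_right _ _).trans (le_max_left _ _)), by simp⟩
            ⟨hDup z hz Y ((le_max_left _ _).trans (le_max_left _ _)), by simp⟩
      _ ≤ C * (max (Y ^ (θ - 1)) 1 * d) := by rw [mul_assoc]; gcongr
      _ ≤ C * (d ^ θ + d) := by
          gcongr
          exact Real.max_rpow_sub_one_mul_le hθ1 (norm_nonneg _) (le_max_right _ _)
      _ ≤ C * (d ^ θ / θ + d) := by
          gcongr
          exact le_div_self (by positivity) hθ0 hθ1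
  have hzY : z.im ≤ Y := (le_max_left _ _).trans (le_max_left _ _)
  have hwY : w.im ≤ Y := (le_max_right _ _).trans (le_max_left _ _)
  have hYz : Y - z.im ≤ d := sub_le_iff_le_add'.2 <| max_le
    (max_le (by linarith [norm_nonneg (z - w)]) (by linarith [abs_le.1 him]))
    (by linarith [hDim z hz])
  have hYw : Y - w.im ≤ d := sub_le_iff_le_add'.2 <| max_le
    (max_le (by linarith [abs_le.1 him]) (by linarith [norm_nonneg (z - w)]))
    (by linarith [hDim w hw])
  calc ‖φ z - φ w‖ = ‖(φ (z.re + Y * I) - φ (w.re + Y * I)) - (φ (z.re + Y * I) - φ z)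
        + (φ (w.re + Y * I) - φ w)‖ := by congr 1; ring
    _ ≤ ‖φ (z.re + Y * I) - φ (w.re + Y * I)‖ + ‖φ (z.re + Y * I) - φ z‖
        + ‖φ (w.re + Y * I) - φ w‖ := norm_add_le_of_le (norm_sub_le _ _) le_rfl
    _ ≤ C * (d ^ θ / θ + d) + C * (d ^ θ / θ + d) + C * (d ^ θ / θ + d) :=
        add_le_add_three horiz (vert z hz hzY hYz) (vert w hw hwY hYw)
    _ = 3 * C * (d ^ θ / θ + d) := by ring

end UpperHalfPlane

theorem holder_extension_of_deriv_bound_general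
    (R : EReal) (θ : ℝ) (hθ0 : 0 < θ) (hθ1 : θ ≤ 1)
    (D : Set ℂ)
    (hD : D = {z : ℂ | 0 < z.im ∧ -R < (z.re : EReal) ∧ (z.re : EReal) < R})
    (φ : ℂ → ℂ)
    (hdiff : DifferentiableOn ℂ φ D)
    (C : ℝ) (hC : 0 < C)
    (hbound : ∀ z ∈ D, ‖deriv φ z‖ ≤ C * max (z.im ^ (θ - 1)) 1) :
    ∃ g : ℂ → ℂ, ContinuousOn g (closure D) ∧ Set.EqOn g φ D := by
  change D = halfStrip R at hD
  subst hD
  have hω : Tendsto (fun d : ℝ => 3 * C * (d ^ θ / θ + d)) (𝓝 0) (𝓝 0) := by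
    have := Real.continuous_rpow_const hθ0.le
    have hcont : Continuous fun d : ℝ => 3 * C * (d ^ θ / θ + d) := by fun_prop
    simpa [Real.zero_rpow hθ0.ne'] using hcont.tendsto 0
  refine UniformContinuousOn.exists_continuousOn_closure_eqOn <|
    Metric.uniformContinuousOn_of_dist_le hω fun z hz w hw => ?_
  simpa only [dist_eq_norm] using norm_sub_le_of_norm_deriv_le_max_im_rpow (isOpen_halfStrip R)
    (convex_halfStrip R) (fun _ hz => hz.1) (fun _ hz _ => re_add_mul_I_mem_halfStrip R hz) hdiff
    hθ0 hθ1 hC.le hbound hz hw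

/-- If a conformal map `φ` on `(-R,R) × i(0,∞)` (with `R ∈ [1,∞]`) satisfies the derivative
bound `|φ'(z)| ≤ C * max ((Im z)^(θ-1)) 1`, then `φ` extends continuously to the closure. -/
theorem holder_extension_of_deriv_bound
    (R : EReal) (hR : 1 ≤ R) (θ : ℝ) (hθ0 : 0 < θ) (hθ1 : θ ≤ 1)
    (D : Set ℂ)
    (hD : D = {z : ℂ | 0 < z.im ∧ -R < (z.re : EReal) ∧ (z.re : EReal) < R})
    (φ : ℂ → ℂ)
    (hinj : Set.InjOn φ D) (hdiff : DifferentiableOn ℂ φ D)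
    (C : ℝ) (hC : 0 < C)
    (hbound : ∀ z ∈ D, ‖deriv φ z‖ ≤ C * max (z.im ^ (θ - 1)) 1) :
    ∃ g : ℂ → ℂ, ContinuousOn g (closure D) ∧ Set.EqOn g φ D :=
  holder_extension_of_deriv_bound_general R θ hθ0 hθ1 D hD φ hdiff C hC hbound
end

section
/- For $\kappa \ge 0$ define $r(\kappa) = \min\{\tfrac14 + \tfrac1\kappa, 1\}$ (with $r(0)=1$), $p(\kappa,r) = \tfrac12 r(\kappa+4-\kappa r)$, $q(\kappa,\lambda,r) = p(\kappa,r) - \tfrac12 r(\kappa+\lambda)$, and $\lambda^{\mathrm{h\ddot{o}l}}_\kappa = \max\{2-\kappa, \frac{(\kappa-4)^2}{2(\kappa+4)}\}$. Then $\lambda^{\mathrm{h\ddot{o}l}}_\kappa = 0$ if and only if $\kappa = 4$, and if $\kappa \ne 4$ and $0 \le \lambda < \lambda^{\mathrm{h\ddot{o}l}}_\kappa$ then $p(\kappa, r(\kappa)) + q(\kappa, \lambda, r(\kappa)) > 1 + 2r(\kappa)$. -/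
noncomputable def rK (κ : ℝ) : ℝ := if κ = 0 then 1 else min (1/4 + 1/κ) 1

noncomputable def pK (κ r : ℝ) : ℝ := r * (κ + 4 - κ * r) / 2

noncomputable def qK (κ lam r : ℝ) : ℝ := pK κ r - r * (κ + lam) / 2

noncomputable def lamHol (κ : ℝ) : ℝ := max (2 - κ) ((κ - 4) ^ 2 / (2 * (κ + 4)))

/-- `λ^höl_κ = 0` iff `κ = 4`, and for `κ ≠ 4`, `0 ≤ λ < λ^höl_κ` one has
`p(κ, r(κ)) + q(κ, λ, r(κ)) > 1 + 2 r(κ)`. -/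
theorem exponents_inequality (κ : ℝ) (hκ : 0 ≤ κ) :
    (lamHol κ = 0 ↔ κ = 4) ∧
    (κ ≠ 4 → ∀ lam : ℝ, 0 ≤ lam → lam < lamHol κ →
      pK κ (rK κ) + qK κ lam (rK κ) > 1 + 2 * rK κ) := by
  have hden : (0:ℝ) < 2 * (κ + 4) := by linarith
  constructor
  · constructor
    · intro h
      have h1 : (κ - 4) ^ 2 / (2 * (κ + 4)) ≤ 0 := h ▸ le_max_right _ _
      have h2 : (κ - 4) ^ 2 ≤ 0 := by
        have := (div_nonpos_iff.mp h1)
        rcases this with ⟨ha, hb⟩ | ⟨ha, hb⟩ <;> nlinarith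
      nlinarith [sq_nonneg (κ - 4)]
    · intro h
      subst h
      norm_num [lamHol]
  · intro hne lam hlam hlt
    rcases le_or_gt κ (4/3) with hc | hc
    · -- r = 1
      have hr : rK κ = 1 := by
        unfold rK
        split
        · rfl
        · rename_i h0
          have hκpos : 0 < κ := lt_of_le_of_ne hκ (Ne.symm h0)
          rw [min_eq_right]
          rw [← sub_nonneg]
          have : (1:ℝ) / 4 + 1 / κ - 1 = (4 - 3 * κ) / (4 * κ) := by
            field_simp; ring
          rw [this]
          apply div_nonneg (by linarith) (by linarith)
      have hmax : lamHol κ = 2 - κ := by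
        unfold lamHol
        rw [max_eq_left]
        rw [div_le_iff₀ hden]
        nlinarith
      rw [hmax] at hlt
      rw [hr]
      unfold pK qK pK
      nlinarith
    · -- r = 1/4 + 1/κ
      have hκpos : 0 < κ := by linarith
      have hr : rK κ = 1/4 + 1/κ := by
        unfold rK
        rw [if_neg (by positivity), min_eq_left]
        rw [← sub_nonneg]
        have : (1:ℝ) - (1 / 4 + 1 / κ) = (3 * κ - 4) / (4 * κ) := by
          field_simp; ring
        rw [this]
        apply div_nonneg (by linarith) (by linarith)
      have hmax : lamHol κ = (κ - 4) ^ 2 / (2 * (κ + 4)) := by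
        unfold lamHol
        rw [max_eq_right]
        rw [le_div_iff₀ hden]
        nlinarith
      rw [hmax] at hlt
      have hlt' : lam * (2 * (κ + 4)) < (κ - 4) ^ 2 := (lt_div_iff₀ hden).mp hlt
      rw [hr]
      unfold pK qK pK
      rw [gt_iff_lt, ← sub_pos]
      have hexp : (1/4 + 1/κ) * (κ + 4 - κ * (1/4 + 1/κ)) / 2 +
          ((1/4 + 1/κ) * (κ + 4 - κ * (1/4 + 1/κ)) / 2 - (1/4 + 1/κ) * (κ + lam) / 2) -
          (1 + 2 * (1/4 + 1/κ)) = ((κ - 4) ^ 2 - lam * (2 * (κ + 4))) / (16 * κ) := by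
        field_simp
        ring
      rw [hexp]
      exact div_pos (by linarith) (by linarith)
end

section
/- For $\kappa \ne 4$, $0 \le \lambda < \lambda^{\mathrm{h\ddot{o}l}}_\kappa$, let $\Theta(\kappa,\lambda) = \frac{p + q - 2r - 1}{2p + q}$ where $r = r(\kappa) = \min\{\tfrac14+\tfrac1\kappa,1\}$, $p = \tfrac12 r(\kappa+4-\kappa r)$, $q = p - \tfrac12 r(\kappa+\lambda)$. Then $\Theta(\kappa,\lambda) \in (0,2/5)$, and for every $\theta$ with $0 < \theta < \Theta(\kappa,\lambda)$ one has $(1-2\theta)p + (1-\theta)q > 1 + 2r$. -/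
noncomputable def ThetaHol (κ lam : ℝ) : ℝ :=
  (pK κ (rK κ) + qK κ lam (rK κ) - 2 * rK κ - 1) / (2 * pK κ (rK κ) + qK κ lam (rK κ))

lemma key_facts (κ lam : ℝ) (hκ0 : 0 ≤ κ) (hκ4 : κ ≠ 4)
    (hlam0 : 0 ≤ lam) (hlam : lam < lamHol κ) :
    0 < pK κ (rK κ) + qK κ lam (rK κ) - 2 * rK κ - 1 ∧
    0 < 2 * pK κ (rK κ) + qK κ lam (rK κ) ∧
    5 * (pK κ (rK κ) + qK κ lam (rK κ) - 2 * rK κ - 1) <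
      2 * (2 * pK κ (rK κ) + qK κ lam (rK κ)) := by
  rcases eq_or_lt_of_le hκ0 with h0 | h0
  · -- κ = 0
    have hk : κ = 0 := h0.symm
    subst hk
    have hr : rK 0 = 1 := by simp [rK]
    have hl : lam < 2 := by
      have h2 : lamHol 0 = 2 := by norm_num [lamHol]
      linarith [h2 ▸ hlam]
    rw [hr]
    unfold pK qK pK
    norm_num
    refine ⟨by linarith, by linarith, by linarith⟩
  · rcases le_or_gt κ (4/3) with h43 | h43
    · -- 0 < κ ≤ 4/3 : r = 1
      have hr : rK κ = 1 := by
        rw [rK, if_neg (ne_of_gt h0)]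
        have h1 : (3:ℝ)/4 ≤ 1/κ := by
          rw [le_div_iff₀ h0]; nlinarith
        exact min_eq_right (by linarith)
      have hle : (κ - 4) ^ 2 / (2 * (κ + 4)) ≤ 2 - κ := by
        rw [div_le_iff₀ (by linarith)]
        nlinarith
      have hl : lam < 2 - κ := by
        have h2 := hlam
        rw [lamHol, max_eq_left hle] at h2
        exact h2
      rw [hr]
      unfold pK qK pK
      refine ⟨by nlinarith, by nlinarith, by nlinarith⟩
    · -- κ > 4/3 : r = 1/4 + 1/κ
      have hκpos : (0:ℝ) < κ := by linarith
      have hr : rK κ = 1/4 + 1/κ := by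
        rw [rK, if_neg (ne_of_gt hκpos)]
        have h1 : (1:ℝ)/κ ≤ 3/4 := by
          rw [div_le_iff₀ hκpos]; nlinarith
        exact min_eq_left (by linarith)
      have hge : 2 - κ ≤ (κ - 4) ^ 2 / (2 * (κ + 4)) := by
        rw [le_div_iff₀ (by linarith)]
        nlinarith
      have hl : lam < (κ - 4) ^ 2 / (2 * (κ + 4)) := by
        have h2 := hlam
        rw [lamHol, max_eq_right hge] at h2
        exact h2
      have hl' : 2 * (κ + 4) * lam < (κ - 4) ^ 2 := by
        rw [lt_div_iff₀ (by linarith)] at hl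
        linarith
      have hNeq : pK κ (rK κ) + qK κ lam (rK κ) - 2 * rK κ - 1 =
          (2 * (κ - 4) ^ 2 - 4 * (κ + 4) * lam) / (32 * κ) := by
        rw [hr]; unfold pK qK pK
        field_simp
        ring
      have hDeq : 2 * pK κ (rK κ) + qK κ lam (rK κ) =
          ((κ + 4) * (5 * κ + 36 - 4 * lam)) / (32 * κ) := by
        rw [hr]; unfold pK qK pK
        field_simp
        ring
      have hden : (0:ℝ) < 32 * κ := by linarith
      have hNnum : 0 < 2 * (κ - 4) ^ 2 - 4 * (κ + 4) * lam := by nlinarith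
      have hDnum : 0 < (κ + 4) * (5 * κ + 36 - 4 * lam) := by nlinarith
      refine ⟨?_, ?_, ?_⟩
      · rw [hNeq]; exact div_pos hNnum hden
      · rw [hDeq]; exact div_pos hDnum hden
      · rw [hNeq, hDeq, ← mul_div_assoc, ← mul_div_assoc,
          div_lt_div_iff₀ hden hden]
        nlinarith

/-- For `κ ≠ 4` and `0 ≤ λ < λ^höl_κ`, the exponent `Θ(κ,λ)` lies in `(0, 2/5)`, and for
every `0 < θ < Θ(κ,λ)` one has `(1-2θ)p + (1-θ)q > 1 + 2r`. -/
theorem theta_hol_inequality (κ lam : ℝ) (hκ0 : 0 ≤ κ) (hκ4 : κ ≠ 4)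
    (hlam0 : 0 ≤ lam) (hlam : lam < lamHol κ) :
    (0 < ThetaHol κ lam ∧ ThetaHol κ lam < 2/5) ∧
    ∀ θ : ℝ, 0 < θ → θ < ThetaHol κ lam →
      (1 - 2 * θ) * pK κ (rK κ) + (1 - θ) * qK κ lam (rK κ) > 1 + 2 * rK κ := by
  obtain ⟨hN, hD, h52⟩ := key_facts κ lam hκ0 hκ4 hlam0 hlam
  constructor
  · constructor
    · exact div_pos hN hD
    · rw [ThetaHol, div_lt_div_iff₀ hD (by norm_num)]
      linarith
  · intro θ hθ0 hθ
    rw [ThetaHol, lt_div_iff₀ hD] at hθ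
    nlinarith [hθ]
end

section
/- Fix $r < 0$ and define $F_r(v; x, y) = \big(\frac{(x-v)^2+y^2}{x^2+y^2}\big)^r - 1 + \frac{2rvx}{x^2+y^2}$ for $v, x \in \mathbb{R}$, $y > 0$. Then $F_r(0)=0$, $\partial_v F_r(0)=0$, and the second derivative satisfies $\partial_v^2 F_r(v) \le \frac{4r(r-1)}{x^2+y^2}\big(\frac{x^2+y^2}{(x-v)^2+y^2}\big)^{1-r}$ for all $v \in \mathbb{R}$. -/
/-!
With `q v = ((x - v)² + y²) / (x² + y²)` we have `q 0 = 1`, `q' v = 2 (v - x) / (x² + y²)` and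
`F'' = r (r - 1) q^(r-2) q'² + r q^(r-1) q''`. The second term is nonpositive since `r < 0`;
in the first, `(v - x)² ≤ (x - v)² + y²` absorbs the factor `q⁻¹` of `q^(r-2) = q^(r-1) q⁻¹`.
-/

open Real

section

variable (x : ℝ) {c A : ℝ}

lemma hasDerivAt_sq_sub_add_div (v : ℝ) :
    HasDerivAt (fun v => ((x - v) ^ 2 + c) / A) (2 * (v - x) / A) v := by
  have h := ((((hasDerivAt_id v).const_sub x).pow 2).add_const c).div_const A
  exact h.congr_deriv (by simp only [id, Nat.cast_ofNat]; ring)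

lemma hasDerivAt_rpow_sq_sub_add_div (hc : 0 < c) (hA : A ≠ 0) (p v : ℝ) :
    HasDerivAt (fun v => (((x - v) ^ 2 + c) / A) ^ p)
      (p * (((x - v) ^ 2 + c) / A) ^ (p - 1) * (2 * (v - x) / A)) v := by
  have hq : ((x - v) ^ 2 + c) / A ≠ 0 := div_ne_zero (by positivity) hA
  exact ((hasDerivAt_sq_sub_add_div x v).rpow_const (Or.inl hq)).congr_deriv (by ring)

end

lemma rpow_sub_two_eq_inv_rpow_one_sub_mul_inv {q : ℝ} (hq : 0 < q) (r : ℝ) :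
    q ^ (r - 2) = q⁻¹ ^ (1 - r) * q⁻¹ := by
  rw [inv_rpow hq.le, ← rpow_neg hq.le, ← rpow_neg_one, ← rpow_add hq]
  ring_nf

lemma rpow_sub_one_eq_inv_rpow_one_sub {q : ℝ} (hq : 0 < q) (r : ℝ) :
    q ^ (r - 1) = q⁻¹ ^ (1 - r) := by
  rw [inv_rpow hq.le, ← rpow_neg hq.le, neg_sub]

lemma rpow_div_second_deriv_le {r A b d : ℝ} (hr : r < 0) (hA : 0 < A) (hb : 0 < b)
    (hd : d ^ 2 ≤ b) :
    r * (r - 1) * (b / A) ^ (r - 2) * (2 * d / A) ^ 2 + r * (b / A) ^ (r - 1) * (2 / A)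
      ≤ 4 * r * (r - 1) / A * (A / b) ^ (1 - r) := by
  have hq : 0 < b / A := div_pos hb hA
  rw [rpow_sub_two_eq_inv_rpow_one_sub_mul_inv hq, rpow_sub_one_eq_inv_rpow_one_sub hq, inv_div]
  set P := (A / b) ^ (1 - r)
  have hP : 0 < P := by positivity
  have hfirst : r * (r - 1) * (P * (A / b)) * (2 * d / A) ^ 2 ≤ 4 * r * (r - 1) / A * P := by
    have hdb : d ^ 2 / b ≤ 1 := (div_le_one hb).mpr hd
    have hcoef : 0 ≤ 4 * r * (r - 1) / A * P :=
      mul_nonneg (div_nonneg (by nlinarith) hA.le) hP.le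
    calc r * (r - 1) * (P * (A / b)) * (2 * d / A) ^ 2
        = 4 * r * (r - 1) / A * P * (d ^ 2 / b) := by field_simp; ring
      _ ≤ 4 * r * (r - 1) / A * P := mul_le_of_le_one_right hcoef hdb
  have hsecond : r * P * (2 / A) ≤ 0 :=
    mul_nonpos_of_nonpos_of_nonneg (mul_nonpos_of_nonpos_of_nonneg hr.le hP.le) (by positivity)
  linarith

/-- For fixed `r < 0`, the function
`F_r(v) = (((x-v)²+y²)/(x²+y²))^r - 1 + 2rvx/(x²+y²)` satisfies `F_r(0) = 0`,
`F_r'(0) = 0`, and `F_r''(v) ≤ 4r(r-1)/(x²+y²) · ((x²+y²)/((x-v)²+y²))^{1-r}`. -/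
theorem F_r_derivatives (r x y : ℝ) (hr : r < 0) (hy : 0 < y) :
    let F : ℝ → ℝ := fun v =>
      (((x - v) ^ 2 + y ^ 2) / (x ^ 2 + y ^ 2)) ^ r - 1 + 2 * r * v * x / (x ^ 2 + y ^ 2)
    F 0 = 0 ∧ deriv F 0 = 0 ∧
    ∀ v : ℝ, deriv (deriv F) v
      ≤ 4 * r * (r - 1) / (x ^ 2 + y ^ 2)
          * ((x ^ 2 + y ^ 2) / ((x - v) ^ 2 + y ^ 2)) ^ (1 - r) := by
  intro F
  set A := x ^ 2 + y ^ 2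
  have hA : 0 < A := by positivity
  have hc : 0 < y ^ 2 := by positivity
  have hF' : ∀ v, HasDerivAt F
      (r * (((x - v) ^ 2 + y ^ 2) / A) ^ (r - 1) * (2 * (v - x) / A) + 2 * r * x / A) v :=
    fun v =>
    (((hasDerivAt_rpow_sq_sub_add_div x hc hA.ne' r v).sub_const 1).add
      ((((hasDerivAt_id v).const_mul (2 * r)).mul_const x).div_const A)).congr_deriv
        (by simp only [mul_one])
  have hF'' : ∀ v, HasDerivAt (deriv F)
      (r * (r - 1) * (((x - v) ^ 2 + y ^ 2) / A) ^ (r - 2) * (2 * (v - x) / A) ^ 2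
        + r * (((x - v) ^ 2 + y ^ 2) / A) ^ (r - 1) * (2 / A)) v := by
    intro v
    rw [show deriv F = _ from funext fun v => (hF' v).deriv]
    have hlin : HasDerivAt (fun v => 2 * (v - x) / A) (2 / A) v :=
      ((((hasDerivAt_id v).sub_const x).const_mul 2).div_const A).congr_deriv (by simp)
    refine ((((hasDerivAt_rpow_sq_sub_add_div x hc hA.ne' (r - 1) v).const_mul r).mul
      hlin).add_const _).congr_deriv ?_
    rw [show r - 1 - 1 = r - 2 by ring]
    ring
  have hq0 : ((x - 0) ^ 2 + y ^ 2) / A = 1 := by rw [sub_zero, div_self hA.ne']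
  refine ⟨by simp [F, A, div_self hA.ne'], ?_, fun v => ?_⟩
  · rw [(hF' 0).deriv, hq0, one_rpow]
    ring
  · rw [(hF'' v).deriv]
    exact rpow_div_second_deriv_le hr hA (by positivity) (by nlinarith)
end

section
/- Fix $r < 0$, real $x,y$ with $|x| \le y$ and $y > 0$. Then for all $v \in \mathbb{R}$, $F_r(v; x, y) \le 2^{2-r}\,\frac{r(r-1)\,v^2}{x^2+y^2}$, where $F_r(v;x,y) = \big(\frac{(x-v)^2+y^2}{x^2+y^2}\big)^r - 1 + \frac{2rvx}{x^2+y^2}$. -/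
/-!
`F_r(0) = F_r'(0) = 0`, so a uniform upper bound `M` on `F_r''` gives `F_r(v) ≤ M v² / 2`.
Writing `F_r = g ^ r - 1 + (linear)` with `g v = ((x - v)² + y²) / (x² + y²)`, we have
`F_r'' = r (r - 1) g^(r-2) g'² + r g^(r-1) g''`: the second term is `≤ 0` since `r ≤ 0`, and
`g'² ≤ 4 g / (x² + y²)`, so `F_r'' ≤ 4 r (r - 1) g^(r-1) / (x² + y²)`. Finally `|x| ≤ y` forces
`g ≥ 1 / 2`, whence `g^(r-1) ≤ 2^(1-r)`.
-/

open Real Set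

theorem le_linear_add_sq_of_hasDerivAt2_le {f f' f'' : ℝ → ℝ} {M : ℝ}
    (hf : ∀ t, HasDerivAt f (f' t) t) (hf' : ∀ t, HasDerivAt f' (f'' t) t)
    (hM : ∀ t, f'' t ≤ M) (a b : ℝ) :
    f b ≤ f a + f' a * (b - a) + M / 2 * (b - a) ^ 2 := by
  -- the gap between the quadratic majorant and `f` is convex with a critical point at `a`
  let φ : ℝ → ℝ := fun t ↦ f a + f' a * (t - a) + M / 2 * (t - a) ^ 2 - f t
  let φ' : ℝ → ℝ := fun t ↦ f' a + M * (t - a) - f' t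
  have hφ (t : ℝ) : HasDerivAt φ (φ' t) t := by
    have := ((((hasDerivAt_id t).sub_const a).const_mul (f' a)).const_add (f a)).add
      ((((hasDerivAt_id t).sub_const a).pow 2).const_mul (M / 2)) |>.sub (hf t)
    exact this.congr_deriv (by simp only [φ', id]; ring)
  have hφ' (t : ℝ) : HasDerivAt φ' (M - f'' t) t := by
    have := ((((hasDerivAt_id t).sub_const a).const_mul M).const_add (f' a)).sub (hf' t)
    exact this.congr_deriv (by ring)
  have hconv : ConvexOn ℝ univ φ :=
    convexOn_of_hasDerivWithinAt2_nonneg convex_univ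
      (fun t _ ↦ (hφ t).continuousAt.continuousWithinAt) (fun t _ ↦ (hφ t).hasDerivWithinAt)
      (fun t _ ↦ (hφ' t).hasDerivWithinAt) (fun t _ ↦ sub_nonneg.2 (hM t))
  have hmin : IsMinOn φ univ a := hconv.isMinOn_of_rightDeriv_eq_zero (by simp) <| by
    rw [(hφ a).hasDerivWithinAt.derivWithin (uniqueDiffWithinAt_Ioi a)]
    simp [φ']
  have h : φ a ≤ φ b := hmin (mem_univ b)
  dsimp only [φ] at h
  linarith

noncomputable def sqDistRatio (x y v : ℝ) : ℝ := ((x - v) ^ 2 + y ^ 2) / (x ^ 2 + y ^ 2)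

section
variable {x y : ℝ}

lemma sqDistRatio_pos (hy : y ≠ 0) (v : ℝ) : 0 < sqDistRatio x y v := by
  unfold sqDistRatio; positivity

lemma sqDistRatio_zero (hy : y ≠ 0) : sqDistRatio x y 0 = 1 := by
  rw [sqDistRatio, sub_zero, div_self (by positivity)]

lemma hasDerivAt_sqDistRatio (v : ℝ) :
    HasDerivAt (sqDistRatio x y) (2 * (v - x) / (x ^ 2 + y ^ 2)) v := by
  have := ((((hasDerivAt_id v).const_sub x).pow 2).add_const (y ^ 2)).div_const (x ^ 2 + y ^ 2)
  exact this.congr_deriv (by simp only [id]; ring)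

lemma sq_sub_div_le_sqDistRatio (v : ℝ) :
    (v - x) ^ 2 / (x ^ 2 + y ^ 2) ≤ sqDistRatio x y v := by
  rw [sqDistRatio, ← neg_sub, neg_sq]
  gcongr
  linarith [sq_nonneg y]

lemma half_le_sqDistRatio (hy : 0 < y) (hxy : |x| ≤ y) (v : ℝ) : 1 / 2 ≤ sqDistRatio x y v := by
  have hx : x ^ 2 ≤ y ^ 2 := sq_le_sq' (abs_le.1 hxy).1 (abs_le.1 hxy).2
  rw [sqDistRatio, le_div_iff₀ (by positivity)]
  nlinarith [sq_nonneg (x - v)]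

end

noncomputable def Fr (r x y v : ℝ) : ℝ :=
  sqDistRatio x y v ^ r - 1 + 2 * r * v * x / (x ^ 2 + y ^ 2)

noncomputable def Fr' (r x y v : ℝ) : ℝ :=
  r * sqDistRatio x y v ^ (r - 1) * (2 * (v - x) / (x ^ 2 + y ^ 2)) + 2 * r * x / (x ^ 2 + y ^ 2)

noncomputable def Fr'' (r x y v : ℝ) : ℝ :=
  r * (r - 1) * sqDistRatio x y v ^ (r - 2) * (2 * (v - x) / (x ^ 2 + y ^ 2)) ^ 2
    + r * sqDistRatio x y v ^ (r - 1) * (2 / (x ^ 2 + y ^ 2))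

section
variable {r x y : ℝ}

lemma Fr_zero (hy : y ≠ 0) : Fr r x y 0 = 0 := by
  simp [Fr, sqDistRatio_zero hy]

lemma Fr'_zero (hy : y ≠ 0) : Fr' r x y 0 = 0 := by
  simp only [Fr', sqDistRatio_zero hy, one_rpow]
  ring

lemma hasDerivAt_Fr (hy : y ≠ 0) (v : ℝ) : HasDerivAt (Fr r x y) (Fr' r x y v) v := by
  have hg := (hasDerivAt_sqDistRatio (x := x) v).rpow_const (p := r)
    (Or.inl (sqDistRatio_pos hy v).ne')
  have := ((hg.sub_const 1).add (((hasDerivAt_id v).const_mul (2 * r)).mul_const x |>.div_const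
    (x ^ 2 + y ^ 2)))
  exact this.congr_deriv (by simp only [Fr']; ring)

lemma hasDerivAt_Fr' (hy : y ≠ 0) (v : ℝ) : HasDerivAt (Fr' r x y) (Fr'' r x y v) v := by
  have hg := (hasDerivAt_sqDistRatio (x := x) v).rpow_const (p := r - 1)
    (Or.inl (sqDistRatio_pos hy v).ne')
  have hl : HasDerivAt (fun t ↦ 2 * (t - x) / (x ^ 2 + y ^ 2)) (2 / (x ^ 2 + y ^ 2)) v := by
    simpa using (((hasDerivAt_id v).sub_const x).const_mul 2).div_const (x ^ 2 + y ^ 2)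
  have := ((hg.const_mul r).mul hl).add_const (2 * r * x / (x ^ 2 + y ^ 2))
  refine this.congr_deriv ?_
  rw [Fr'', show r - 1 - 1 = r - 2 by ring]
  ring

lemma Fr''_le (hr : r ≤ 0) (hy : y ≠ 0) (v : ℝ) :
    Fr'' r x y v ≤ 4 * r * (r - 1) / (x ^ 2 + y ^ 2) * sqDistRatio x y v ^ (r - 1) := by
  set g := sqDistRatio x y v
  set c := x ^ 2 + y ^ 2
  have hg : 0 < g := sqDistRatio_pos hy v
  have hc : 0 < c := by positivity
  have hgr : g ^ (r - 2) * g = g ^ (r - 1) := by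
    rw [← rpow_add_one hg.ne']; ring_nf
  have hsq : (2 * (v - x) / c) ^ 2 ≤ 4 / c * g := by
    calc (2 * (v - x) / c) ^ 2 = 4 / c * ((v - x) ^ 2 / c) := by ring
      _ ≤ 4 / c * g := by gcongr; exact sq_sub_div_le_sqDistRatio v
  have hrr : 0 ≤ r * (r - 1) := mul_nonneg_of_nonpos_of_nonpos hr (by linarith)
  calc Fr'' r x y v
      ≤ r * (r - 1) * g ^ (r - 2) * (4 / c * g) + 0 := by
        unfold Fr''
        gcongr
        · exact mul_nonpos_of_nonpos_of_nonneg (mul_nonpos_of_nonpos_of_nonneg hr (by positivity))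
            (by positivity)
    _ = 4 * r * (r - 1) / c * g ^ (r - 1) := by rw [← hgr]; ring

lemma sqDistRatio_rpow_le (hr : r ≤ 1) (hy : 0 < y) (hxy : |x| ≤ y) (v : ℝ) :
    sqDistRatio x y v ^ (r - 1) ≤ 2 ^ (1 - r) := by
  calc sqDistRatio x y v ^ (r - 1) ≤ (1 / 2) ^ (r - 1) :=
        rpow_le_rpow_of_nonpos one_half_pos (half_le_sqDistRatio hy hxy v) (by linarith)
    _ = 2 ^ (1 - r) := by
        rw [one_div, inv_rpow zero_le_two, ← rpow_neg zero_le_two, neg_sub]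

end

/-- For `r < 0`, `|x| ≤ y`, `y > 0`:
`F_r(v;x,y) ≤ 2^{2-r} r(r-1) v² / (x²+y²)` for all real `v`. -/
theorem F_r_bound_small_x (r x y : ℝ) (hr : r < 0) (hy : 0 < y) (hxy : |x| ≤ y) :
    ∀ v : ℝ,
      (((x - v) ^ 2 + y ^ 2) / (x ^ 2 + y ^ 2)) ^ r - 1 + 2 * r * v * x / (x ^ 2 + y ^ 2)
        ≤ (2 : ℝ) ^ (2 - r) * (r * (r - 1) * v ^ 2 / (x ^ 2 + y ^ 2)) := by
  intro v
  have hrr : 0 ≤ 4 * r * (r - 1) / (x ^ 2 + y ^ 2) := div_nonneg (by nlinarith) (by positivity)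
  have hM (t : ℝ) : Fr'' r x y t ≤ 4 * r * (r - 1) / (x ^ 2 + y ^ 2) * 2 ^ (1 - r) :=
    (Fr''_le hr.le hy.ne' t).trans
      (mul_le_mul_of_nonneg_left (sqDistRatio_rpow_le (by linarith) hy hxy t) hrr)
  calc Fr r x y v
      ≤ Fr r x y 0 + Fr' r x y 0 * (v - 0)
          + 4 * r * (r - 1) / (x ^ 2 + y ^ 2) * 2 ^ (1 - r) / 2 * (v - 0) ^ 2 :=
        le_linear_add_sq_of_hasDerivAt2_le (hasDerivAt_Fr hy.ne') (hasDerivAt_Fr' hy.ne') hM 0 v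
    _ = 2 ^ (1 - r + 1) * (r * (r - 1) * v ^ 2 / (x ^ 2 + y ^ 2)) := by
        rw [Fr_zero hy.ne', Fr'_zero hy.ne', rpow_add_one two_ne_zero]
        ring
    _ = 2 ^ (2 - r) * (r * (r - 1) * v ^ 2 / (x ^ 2 + y ^ 2)) := by ring_nf
end
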